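/- Let β ≥ 1 and for t > 0 define g(x,t) = ∫_ℝ e^{-t|ξ|^{2β}} e^{i x ξ} dξ. Then g(·,t) is integrable for every t > 0, and its L¹(ℝ) norm is independent of t: ‖g(·,t)‖_{L¹(ℝ)} = ‖g(·,1)‖_{L¹(ℝ)} < ∞. -/

import Mathlib

/-!
For `p = 2β ≥ 2` the profile `φ(ξ) = exp(-t|ξ|^p)` is twice differentiable, and `φ`, `φ'`, `φ''`
are powers of `|ξ|` times `φ`, hence integrable. Two integrations by parts bound `|𝓕φ(w)|` by
`C (1 + w²)⁻¹`, so `g(·,t)`, a dilate of `𝓕φ`, is integrable. The substitution `ξ = cη` gives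
`g(x,t) = c g(cx, c^{2β} t)`; with `c = t^{-1/(2β)}` this exhibits `g(·,t)` as an `L¹`-isometric
dilate of `g(·,1)`.
-/

open MeasureTheory Real

/-- The 1D kernel function associated with the Fourier multiplier `e^{-t|ξ|^{2β}}`:
`g β t x = ∫_ℝ e^{-t|ξ|^{2β}} e^{i x ξ} dξ`. -/
noncomputable def kernelG (β t x : ℝ) : ℂ :=
  ∫ ξ : ℝ, (Real.exp (-t * |ξ| ^ (2 * β)) : ℂ) * Complex.exp (Complex.I * x * ξ)

open Set FourierTransform

theorem abs_mul_abs_rpow (x : ℝ) {q : ℝ} (hq : q + 1 ≠ 0) : |x * |x| ^ q| = |x| ^ (q + 1) := by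
  rw [abs_mul, abs_of_nonneg (rpow_nonneg (abs_nonneg x) q), rpow_add' (abs_nonneg x) hq,
    rpow_one, mul_comm]

theorem mul_abs_rpow_sq (x : ℝ) {q : ℝ} (hq : q + 1 ≠ 0) :
    (x * |x| ^ q) ^ 2 = |x| ^ ((q + 1) * 2) := by
  rw [← sq_abs, abs_mul_abs_rpow x hq, ← rpow_mul_natCast (abs_nonneg x)]
  norm_num

theorem hasDerivAt_mul_abs_rpow {q : ℝ} (hq : 0 ≤ q) (x : ℝ) :
    HasDerivAt (fun x : ℝ => x * |x| ^ q) ((q + 1) * |x| ^ q) x := by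
  have hcont : Continuous fun x : ℝ => |x| ^ q := continuous_abs.rpow_const fun _ => .inr hq
  refine hasDerivAt_of_hasDerivAt_of_ne' (x := 0) (fun y hy => ?_)
    (continuous_id.mul hcont).continuousAt (continuous_const.mul hcont).continuousAt x
  have hy' : |y| ≠ 0 := abs_ne_zero.2 hy
  refine ((hasDerivAt_id y).mul ((hasDerivAt_abs hy).rpow_const (Or.inl hy'))).congr_deriv ?_
  have hsign : y * SignType.sign y = |y| := self_mul_sign y
  rw [rpow_sub_one hy']
  simp only [id, Pi.mul_apply]
  field_simp
  linear_combination q * hsign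

theorem integrable_abs_rpow_mul_exp_neg_mul_abs_rpow {s p t : ℝ} (hs : -1 < s) (hp : 0 < p)
    (ht : 0 < t) : Integrable fun x : ℝ => |x| ^ s * exp (-t * |x| ^ p) := by
  have hpos : IntegrableOn (fun x : ℝ => |x| ^ s * exp (-t * |x| ^ p)) (Ioi 0) :=
    (integrableOn_rpow_mul_exp_neg_mul_rpow hs hp ht).congr_fun
      (fun x hx => by rw [abs_of_pos (mem_Ioi.1 hx)]) measurableSet_Ioi
  have hneg : IntegrableOn (fun x : ℝ => |x| ^ s * exp (-t * |x| ^ p)) (Iio 0) := by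
    rw [← (Measure.measurePreserving_neg (volume : Measure ℝ)).integrableOn_comp_preimage
        (Homeomorph.neg ℝ).measurableEmbedding]
    simpa only [Function.comp_def, neg_preimage, neg_Iio, neg_zero, abs_neg] using hpos
  rw [← integrableOn_univ, ← Iio_union_Ici (a := 0), integrableOn_union,
    integrableOn_Ici_iff_integrableOn_Ioi]
  exact ⟨hneg, hpos⟩

section Profile

variable {p t : ℝ}

theorem hasDerivAt_exp_neg_mul_abs_rpow (hp : 1 < p) (t x : ℝ) :
    HasDerivAt (fun x => exp (-t * |x| ^ p))
      (-(t * p) * (x * |x| ^ (p - 2)) * exp (-t * |x| ^ p)) x :=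
  ((hasDerivAt_abs_rpow x hp).const_mul (-t)).exp.congr_deriv (by ring)

theorem hasDerivAt_deriv_exp_neg_mul_abs_rpow (hp : 2 ≤ p) (t x : ℝ) :
    HasDerivAt (fun x => -(t * p) * (x * |x| ^ (p - 2)) * exp (-t * |x| ^ p))
      ((t * p) ^ 2 * ((x * |x| ^ (p - 2)) ^ 2 * exp (-t * |x| ^ p))
        - t * p * (p - 1) * (|x| ^ (p - 2) * exp (-t * |x| ^ p))) x :=
  (((hasDerivAt_mul_abs_rpow (sub_nonneg.2 hp) x).const_mul _).mul
    (hasDerivAt_exp_neg_mul_abs_rpow (by linarith) t x)).congr_deriv (by ring)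

theorem integrable_exp_neg_mul_abs_rpow (hp : 0 < p) (ht : 0 < t) :
    Integrable fun x : ℝ => exp (-t * |x| ^ p) := by
  simpa using integrable_abs_rpow_mul_exp_neg_mul_abs_rpow neg_one_lt_zero hp ht

theorem integrable_deriv_exp_neg_mul_abs_rpow (hp : 1 < p) (ht : 0 < t) :
    Integrable fun x : ℝ => -(t * p) * (x * |x| ^ (p - 2)) * exp (-t * |x| ^ p) := by
  refine ((integrable_abs_rpow_mul_exp_neg_mul_abs_rpow (s := p - 2 + 1) (p := p) (by linarith)
    (by linarith) ht).const_mul (t * p)).mono' (by fun_prop) (.of_forall fun x => ?_)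
  rw [norm_mul, norm_mul, norm_neg, Real.norm_of_nonneg (by positivity),
    Real.norm_of_nonneg (exp_nonneg _), Real.norm_eq_abs, abs_mul_abs_rpow x (by linarith),
    mul_assoc]

theorem integrable_deriv_deriv_exp_neg_mul_abs_rpow (hp : 2 ≤ p) (ht : 0 < t) :
    Integrable fun x : ℝ => (t * p) ^ 2 * ((x * |x| ^ (p - 2)) ^ 2 * exp (-t * |x| ^ p))
        - t * p * (p - 1) * (|x| ^ (p - 2) * exp (-t * |x| ^ p)) := by
  have hp' : p - 2 + 1 ≠ 0 := by linarith
  simp_rw [mul_abs_rpow_sq _ hp']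
  exact ((integrable_abs_rpow_mul_exp_neg_mul_abs_rpow (p := p) (by nlinarith) (by linarith)
    ht).const_mul _).sub
    ((integrable_abs_rpow_mul_exp_neg_mul_abs_rpow (p := p) (by linarith) (by linarith)
    ht).const_mul _)

end Profile

section FourierDecay

variable {E : Type*} [NormedAddCommGroup E] [NormedSpace ℂ E]

theorem Real.norm_fourier_le_integral_norm (f : ℝ → E) (w : ℝ) : ‖𝓕 f w‖ ≤ ∫ v, ‖f v‖ :=
  VectorFourier.norm_fourierIntegral_le_integral_norm _ _ _ _ _

theorem Real.continuous_fourier_of_integrable {f : ℝ → E} (hf : Integrable f) :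
    Continuous (𝓕 f) :=
  VectorFourier.fourierIntegral_continuous Real.continuous_fourierChar
    (innerSL ℝ).continuous₂ hf

theorem Real.fourier_of_hasDerivAt {f f' : ℝ → E} (hf : ∀ x, HasDerivAt f (f' x) x)
    (hfi : Integrable f) (hf'i : Integrable f') (w : ℝ) :
    𝓕 f' w = (2 * π * Complex.I * w) • 𝓕 f w := by
  have hderiv : deriv f = f' := funext fun x => (hf x).deriv
  rw [← hderiv, Real.fourier_deriv hfi (fun x => (hf x).differentiableAt) (hderiv ▸ hf'i)]

theorem Real.sq_mul_norm_fourier_le {f f' f'' : ℝ → E} (hf : ∀ x, HasDerivAt f (f' x) x)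
    (hf' : ∀ x, HasDerivAt f' (f'' x) x) (hfi : Integrable f) (hf'i : Integrable f')
    (hf''i : Integrable f'') (w : ℝ) :
    (2 * π * w) ^ 2 * ‖𝓕 f w‖ ≤ ∫ v, ‖f'' v‖ := by
  have hnorm : ‖2 * π * Complex.I * w‖ = |2 * π * w| := by
    simp [abs_of_pos pi_pos, abs_mul]
  calc (2 * π * w) ^ 2 * ‖𝓕 f w‖ = ‖𝓕 f'' w‖ := by
        rw [Real.fourier_of_hasDerivAt hf' hf'i hf''i, Real.fourier_of_hasDerivAt hf hfi hf'i,
          norm_smul, norm_smul, hnorm, ← mul_assoc, abs_mul_abs_self, sq]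
    _ ≤ ∫ v, ‖f'' v‖ := Real.norm_fourier_le_integral_norm f'' w

theorem Real.integrable_fourier_of_hasDerivAt {f f' f'' : ℝ → E}
    (hf : ∀ x, HasDerivAt f (f' x) x) (hf' : ∀ x, HasDerivAt f' (f'' x) x)
    (hfi : Integrable f) (hf'i : Integrable f') (hf''i : Integrable f'') :
    Integrable (𝓕 f) := by
  have hbound : ∀ w : ℝ,
      ‖𝓕 f w‖ ≤ ((∫ v, ‖f v‖) + (∫ v, ‖f'' v‖) / (2 * π) ^ 2) * (1 + w ^ 2)⁻¹ := by
    intro w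
    have h₀ := Real.norm_fourier_le_integral_norm f w
    have h₂ := Real.sq_mul_norm_fourier_le hf hf' hfi hf'i hf''i w
    rw [mul_pow, mul_assoc, ← le_div_iff₀' (by positivity)] at h₂
    rw [← div_eq_mul_inv, le_div_iff₀ (by positivity)]
    linarith
  refine (integrable_inv_one_add_sq.const_mul _).mono'
    (Real.continuous_fourier_of_integrable hfi).aestronglyMeasurable (.of_forall hbound)

end FourierDecay

theorem eLpNorm_one_smul_comp_mul_left {E : Type*} [NormedAddCommGroup E] [NormedSpace ℝ E]
    (g : ℝ → E) {c : ℝ} (hc : 0 < c) :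
    eLpNorm (fun x => c • g (c * x)) 1 volume = eLpNorm g 1 volume := by
  simp only [eLpNorm_one_eq_lintegral_enorm, enorm_smul]
  rw [lintegral_const_mul' _ _ enorm_ne_top,
    ← (measurableEmbedding_mulLeft₀ hc.ne').lintegral_map fun y => ‖g y‖ₑ,
    Real.map_volume_mul_left hc.ne', lintegral_smul_measure, smul_eq_mul, ← mul_assoc,
    Real.enorm_eq_ofReal hc.le, ← ENNReal.ofReal_mul hc.le, abs_of_pos (inv_pos.2 hc),
    mul_inv_cancel₀ hc.ne', ENNReal.ofReal_one, one_mul]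

/-- Mathlib's `𝓕` integrates against `e^{-2πi v w}`, hence the rescaled argument. -/
theorem kernelG_eq_fourier (β t x : ℝ) :
    kernelG β t x = 𝓕 (fun ξ : ℝ => (exp (-t * |ξ| ^ (2 * β)) : ℂ)) (-(2 * π)⁻¹ * x) := by
  rw [kernelG, fourier_real_eq_integral_exp_smul]
  congr 1 with ξ
  rw [smul_eq_mul, mul_comm]
  congr 2
  push_cast
  field_simp

theorem integrable_kernelG {β t : ℝ} (hβ : 1 ≤ β) (ht : 0 < t) : Integrable (kernelG β t) := by
  have hp : 2 ≤ 2 * β := by linarith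
  have hfourier := Real.integrable_fourier_of_hasDerivAt
    (fun x => (hasDerivAt_exp_neg_mul_abs_rpow (by linarith) t x).ofReal_comp)
    (fun x => (hasDerivAt_deriv_exp_neg_mul_abs_rpow hp t x).ofReal_comp)
    (integrable_exp_neg_mul_abs_rpow (by linarith) ht).ofReal
    (integrable_deriv_exp_neg_mul_abs_rpow (by linarith) ht).ofReal
    (integrable_deriv_deriv_exp_neg_mul_abs_rpow hp ht).ofReal
  exact (hfourier.comp_mul_left' (R := -(2 * π)⁻¹) (neg_ne_zero.2 (by positivity))).congr
    (.of_forall fun x => (kernelG_eq_fourier β t x).symm)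

theorem kernelG_eq_smul_kernelG (β t : ℝ) {c : ℝ} (hc : 0 < c) (x : ℝ) :
    kernelG β t x = c • kernelG β (c ^ (2 * β) * t) (c * x) := by
  have hsubst := Measure.integral_comp_mul_left
    (fun ξ : ℝ => (exp (-t * |ξ| ^ (2 * β)) : ℂ) * Complex.exp (Complex.I * x * ξ)) c
  rw [abs_of_pos (inv_pos.2 hc)] at hsubst
  rw [kernelG, kernelG, ← inv_smul_eq_iff₀ hc.ne', ← hsubst]
  congr 1 with ξ
  rw [abs_mul, abs_of_pos hc, mul_rpow hc.le (abs_nonneg ξ)]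
  push_cast
  ring_nf

/-- For `β ≥ 1` and every `t > 0`, `g(·,t)` is integrable and its `L¹(ℝ)` norm is
independent of `t`: `‖g(·,t)‖_{L¹} = ‖g(·,1)‖_{L¹} < ∞`. -/
theorem kernelG_L1 (β : ℝ) (hβ : 1 ≤ β) (t : ℝ) (ht : 0 < t) :
    Integrable (fun x => kernelG β t x) ∧
      eLpNorm (fun x => kernelG β t x) 1 volume
        = eLpNorm (fun x => kernelG β 1 x) 1 volume := by
  refine ⟨integrable_kernelG hβ ht, ?_⟩
  set c := t ^ (-(2 * β)⁻¹)
  have hc : 0 < c := rpow_pos_of_pos ht _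
  have hct : c ^ (2 * β) * t = 1 := by
    rw [← rpow_mul ht.le, neg_mul, inv_mul_cancel₀ (by positivity), rpow_neg_one,
      inv_mul_cancel₀ ht.ne']
  calc eLpNorm (fun x => kernelG β t x) 1 volume
      = eLpNorm (fun x => c • kernelG β 1 (c * x)) 1 volume := by
        congr 1 with x
        rw [kernelG_eq_smul_kernelG β t hc x, hct]
    _ = eLpNorm (fun x => kernelG β 1 x) 1 volume := eLpNorm_one_smul_comp_mul_left _ hc
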